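/- Let S be a random importance sampling matrix for probabilities p_1,...,p_n and suppose that (deterministically, on the event considered) ‖SXw*‖_2^2 ≥ (1/(ε L^2))·‖Sy‖_2^2 and that ‖SXw‖_2^2 ≤ 2‖Xw‖_2^2 holds for all w (subspace embedding event). Let ŵ minimize ‖S f(Xw) − S y‖_2^2 over w with ‖SXw‖_2^2 ≤ (1/(ε L^2))‖Sy‖_2^2, where f is L-Lipschitz with f(0) = 0, applied entrywise. Then ‖S f(Xŵ) − S y‖_2^2 ≤ 2 ε L^2 ‖Xw*‖_2^2. -/
import Mathlib


open Matrix

/-- On the event where `‖SXw*‖₂² ≥ (1/(εL²))‖Sy‖₂²` and the subspace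
embedding `‖SXw‖₂² ≤ 2‖Xw‖₂²` holds for all `w`, the constrained minimizer
`ŵ` of `‖Sf(Xw) − Sy‖₂²` over `{w : ‖SXw‖₂² ≤ (1/(εL²))‖Sy‖₂²}` (with `f`
`L`-Lipschitz and `f(0) = 0`, applied entrywise) satisfies
`‖Sf(Xŵ) − Sy‖₂² ≤ 2εL²‖Xw*‖₂²`. -/
theorem constrained_min_bound {m n d : ℕ}
    (S : Matrix (Fin m) (Fin n) ℝ) (X : Matrix (Fin n) (Fin d) ℝ)
    (y : Fin n → ℝ) (wstar : Fin d → ℝ) (ε L : ℝ) (hε : 0 < ε) (hL : 0 < L)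
    (f : ℝ → ℝ) (hf : ∀ s t : ℝ, |f s - f t| ≤ L * |s - t|) (hf0 : f 0 = 0)
    (h1 : (1 / (ε * L ^ 2)) * ∑ j, (S.mulVec y j) ^ 2 ≤
      ∑ j, (S.mulVec (X.mulVec wstar) j) ^ 2)
    (hemb : ∀ w : Fin d → ℝ,
      ∑ j, (S.mulVec (X.mulVec w) j) ^ 2 ≤ 2 * ∑ i, (X.mulVec w i) ^ 2)
    (what : Fin d → ℝ)
    (hfeas : ∑ j, (S.mulVec (X.mulVec what) j) ^ 2 ≤
      (1 / (ε * L ^ 2)) * ∑ j, (S.mulVec y j) ^ 2)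
    (hmin : ∀ w : Fin d → ℝ,
      (∑ j, (S.mulVec (X.mulVec w) j) ^ 2 ≤
          (1 / (ε * L ^ 2)) * ∑ j, (S.mulVec y j) ^ 2) →
        ∑ j, (S.mulVec (fun i => f (X.mulVec what i)) j - S.mulVec y j) ^ 2 ≤
          ∑ j, (S.mulVec (fun i => f (X.mulVec w i)) j - S.mulVec y j) ^ 2) :
    ∑ j, (S.mulVec (fun i => f (X.mulVec what i)) j - S.mulVec y j) ^ 2 ≤
      2 * ε * L ^ 2 * ∑ i, (X.mulVec wstar i) ^ 2 := by
  have hεL : 0 < ε * L ^ 2 := by positivity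
  have hz : X.mulVec (0 : Fin d → ℝ) = 0 := Matrix.mulVec_zero X
  have hfz : (fun i => f (X.mulVec (0 : Fin d → ℝ) i)) = (0 : Fin n → ℝ) := by
    funext i; simp [hz, hf0]
  have hfeas0 : ∑ j, (S.mulVec (X.mulVec (0 : Fin d → ℝ)) j) ^ 2 ≤
      (1 / (ε * L ^ 2)) * ∑ j, (S.mulVec y j) ^ 2 := by
    rw [hz]
    simp [Matrix.mulVec_zero]
    positivity
  have key := hmin 0 hfeas0
  rw [hfz] at key
  simp only [Matrix.mulVec_zero, Pi.zero_apply, zero_sub, neg_sq] at key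
  have h1' : ∑ j, (S.mulVec y j) ^ 2 ≤
      (ε * L ^ 2) * ∑ j, (S.mulVec (X.mulVec wstar) j) ^ 2 := by
    rw [one_div] at h1
    calc ∑ j, (S.mulVec y j) ^ 2
        = (ε * L ^ 2) * ((ε * L ^ 2)⁻¹ * ∑ j, (S.mulVec y j) ^ 2) := by
          field_simp
      _ ≤ (ε * L ^ 2) * ∑ j, (S.mulVec (X.mulVec wstar) j) ^ 2 := by
          exact mul_le_mul_of_nonneg_left h1 hεL.le
  calc ∑ j, (S.mulVec (fun i => f (X.mulVec what i)) j - S.mulVec y j) ^ 2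
      ≤ ∑ j, (S.mulVec y j) ^ 2 := key
    _ ≤ (ε * L ^ 2) * ∑ j, (S.mulVec (X.mulVec wstar) j) ^ 2 := h1'
    _ ≤ (ε * L ^ 2) * (2 * ∑ i, (X.mulVec wstar i) ^ 2) :=
        mul_le_mul_of_nonneg_left (hemb wstar) hεL.le
    _ = 2 * ε * L ^ 2 * ∑ i, (X.mulVec wstar i) ^ 2 := by ring
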